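/- If G' is a refinement of a connected graph G, then sgon(G') = sgon(G). Consequently, stable gonality is well-defined on equivalence classes of graphs, where two graphs are equivalent if they are refinements of the same stable graph. -/

import Mathlib

/-!  Finite multigraphs, harmonic morphisms, refinements and stable gonality,
     following Cornelissen–Kato–Kool, "A combinatorial Li–Yau inequality and
     rational points on curves".  -/

attribute [local instance] Classical.propDecidable

noncomputable section

/-- A finite multigraph: a finite vertex type, a finite edge type, and for each
edge its two (possibly equal) endpoints. -/
structure MGraph where
  V : Type
  E : Type
  [vFin : Fintype V]
  [eFin : Fintype E]
  fst : E → V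
  snd : E → V

attribute [instance] MGraph.vFin MGraph.eFin

namespace MGraph

variable (G : MGraph)

/-- The edge `e` is incident to the vertex `v`. -/
def Inc (e : G.E) (v : G.V) : Prop := G.fst e = v ∨ G.snd e = v

/-- The edge `e` joins the vertices `x` and `y` (unordered). -/
def Joins (e : G.E) (x y : G.V) : Prop :=
  (G.fst e = x ∧ G.snd e = y) ∨ (G.fst e = y ∧ G.snd e = x)

/-- Two vertices are adjacent if some edge joins them. -/
def Adj (x y : G.V) : Prop := ∃ e, G.Joins e x y

/-- A multigraph is connected if it is nonempty and any two vertices are joined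
by a walk. -/
def Connected : Prop := Nonempty G.V ∧ ∀ x y : G.V, Relation.ReflTransGen G.Adj x y

/-- No loops. -/
def Loopless : Prop := ∀ e : G.E, G.fst e ≠ G.snd e

/-- A simple graph: no loops and no multiple edges. -/
def Simple : Prop :=
  G.Loopless ∧ ∀ e e' : G.E, G.Joins e' (G.fst e) (G.snd e) → e = e'

/-- A tree is a connected graph of genus `|E| - |V| + 1 = 0`. -/
def IsTree : Prop := G.Connected ∧ Fintype.card G.V = Fintype.card G.E + 1

/-- The degree of a vertex (loops count twice). -/
def degree (v : G.V) : ℕ :=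
  (Finset.univ.filter fun e => G.fst e = v).card +
    (Finset.univ.filter fun e => G.snd e = v).card

/-- The maximal vertex degree `Δ_G`. -/
def maxDegree : ℕ := Finset.univ.sup G.degree

/-- The volume `vol(G) = Σ_v deg v = 2 |E|`. -/
def vol : ℕ := ∑ v, G.degree v

/-- The number of edges joining `x` and `y`. -/
def numEdges (x y : G.V) : ℕ := (Finset.univ.filter fun e => G.Joins e x y).card

/-- The Laplacian matrix `L_G = D_G - A_G`. -/
def lapMatrix : Matrix G.V G.V ℝ := fun x y =>
  (if x = y then (G.degree x : ℝ) else 0) - (G.numEdges x y : ℝ)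

/-- `lam` is the smallest nonzero eigenvalue `λ_G` of the Laplacian of `G`. -/
def IsFirstLapEigenvalue (lam : ℝ) : Prop :=
  IsLeast {μ : ℝ | μ ≠ 0 ∧ ∃ f : G.V → ℝ, f ≠ 0 ∧ G.lapMatrix.mulVec f = μ • f} lam

/-- The normalized Laplacian `D^{-1/2} L D^{-1/2}`. -/
def normLapMatrix : Matrix G.V G.V ℝ := fun x y =>
  G.lapMatrix x y / (Real.sqrt (G.degree x) * Real.sqrt (G.degree y))

/-- `lam` is the smallest nonzero eigenvalue of the normalized Laplacian of `G`. -/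
def IsFirstNormLapEigenvalue (lam : ℝ) : Prop :=
  IsLeast {μ : ℝ | μ ≠ 0 ∧ ∃ f : G.V → ℝ, f ≠ 0 ∧ G.normLapMatrix.mulVec f = μ • f} lam

/-- Reachability by walks staying inside the vertex set `S`. -/
def ReachIn (S : Set G.V) (x y : G.V) : Prop :=
  Relation.ReflTransGen (fun a b => a ∈ S ∧ b ∈ S ∧ G.Adj a b) x y

/-- Reachability by walks not using the edge `e₀`. -/
def ReachAvoidEdge (e₀ : G.E) (x y : G.V) : Prop :=
  Relation.ReflTransGen (fun a b => ∃ e, e ≠ e₀ ∧ G.Joins e a b) x y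

/-- The connected component of `G - e` containing the vertex `v`. -/
def edgeSide (e : G.E) (v : G.V) : Set G.V := {y | G.ReachAvoidEdge e v y}

/-- The connected component of `G - x` containing the vertex `y`. -/
def vertexSide (x y : G.V) : Set G.V := {z | G.ReachIn {v | v ≠ x} y z}

end MGraph

/-- The mass `ν(S)` of a set of vertices. -/
def mass {V : Type} [Fintype V] (ν : V → ℝ) (S : Set V) : ℝ :=
  ∑ v ∈ Finset.univ.filter (fun v => v ∈ S), ν v

/-- A probability measure on a finite vertex set. -/
def IsProbMeasure {V : Type} [Fintype V] (ν : V → ℝ) : Prop :=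
  (∀ v, 0 ≤ ν v) ∧ ∑ v, ν v = 1

namespace MGraph

/-- The size of an edge `e` of a measured tree `(T, ν)`:
`min(ν(T₁(e)), ν(T₂(e)))`. -/
def edgeSize (G : MGraph) (ν : G.V → ℝ) (e : G.E) : ℝ :=
  min (mass ν (G.edgeSide e (G.fst e))) (mass ν (G.edgeSide e (G.snd e)))

/-- `(T, ν)` is `c`-thick: for every vertex `x`, `T - x` has a connected
component of measure at least `c`. -/
def Thick (G : MGraph) (ν : G.V → ℝ) (c : ℝ) : Prop :=
  ∀ x : G.V, ∃ y : G.V, y ≠ x ∧ c ≤ mass ν (G.vertexSide x y)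

/-- Subdivision of the edge `e₀`: a new vertex in the middle of `e₀`,
and `e₀` replaced by two new edges. -/
def subdivide (G : MGraph) (e₀ : G.E) : MGraph where
  V := G.V ⊕ Unit
  E := {e : G.E // e ≠ e₀} ⊕ Bool
  vFin := inferInstance
  eFin := inferInstance
  fst := fun e => match e with
    | Sum.inl e1 => Sum.inl (G.fst e1.1)
    | Sum.inr false => Sum.inl (G.fst e₀)
    | Sum.inr true => Sum.inr ()
  snd := fun e => match e with
    | Sum.inl e1 => Sum.inl (G.snd e1.1)
    | Sum.inr false => Sum.inr ()
    | Sum.inr true => Sum.inl (G.snd e₀)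

/-- Addition of a leaf at the vertex `v₀`: one new vertex, joined to `v₀` by
one new edge. -/
def addLeaf (G : MGraph) (v₀ : G.V) : MGraph where
  V := G.V ⊕ Unit
  E := G.E ⊕ Unit
  vFin := inferInstance
  eFin := inferInstance
  fst := Sum.elim (fun e => Sum.inl (G.fst e)) (fun _ => Sum.inl v₀)
  snd := Sum.elim (fun e => Sum.inl (G.snd e)) (fun _ => Sum.inr ())

/-- An isomorphism of multigraphs. -/
structure Iso (G H : MGraph) where
  eV : G.V ≃ H.V
  eE : G.E ≃ H.E
  ends : ∀ e, H.Joins (eE e) (eV (G.fst e)) (eV (G.snd e))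

/-- `Refines G G' ι p` means: `G'` is a refinement of `G` (obtained from `G`
by finitely many subdivisions of edges and additions of leaves, up to
isomorphism).  The map `ι` identifies the vertices of `G` inside `G'` and the
"provenance" map `p` records, for every edge of `G'`, the edge of `G` it lies
over (`none` for edges of added leaf-trees). -/
inductive Refines : ∀ (G G' : MGraph), (G.V → G'.V) → (G'.E → Option G.E) → Prop
  | refl (G : MGraph) : Refines G G id (fun e => some e)
  | subdiv {G G' : MGraph} {ι : G.V → G'.V} {p : G'.E → Option G.E}
      (h : Refines G G' ι p) (e₀ : G'.E) :
      Refines G (subdivide G' e₀) (fun v => Sum.inl (ι v))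
        (fun e => Sum.elim (fun e1 : {e : G'.E // e ≠ e₀} => p e1.1) (fun _ : Bool => p e₀) e)
  | leaf {G G' : MGraph} {ι : G.V → G'.V} {p : G'.E → Option G.E}
      (h : Refines G G' ι p) (v₀ : G'.V) :
      Refines G (addLeaf G' v₀) (fun v => Sum.inl (ι v))
        (fun e => Sum.elim (fun e1 : G'.E => p e1) (fun _ : Unit => none) e)
  | iso {G G' : MGraph} {ι : G.V → G'.V} {p : G'.E → Option G.E}
      (h : Refines G G' ι p) {G'' : MGraph} (φ : Iso G' G'') :
      Refines G G'' (fun v => φ.eV (ι v)) (fun e => p (φ.eE.symm e))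

/-- `Subdivides G G' ι`: `G'` is obtained from `G` by subdividing edges only
(no leaves added), up to isomorphism. -/
inductive Subdivides : ∀ (G G' : MGraph), (G.V → G'.V) → Prop
  | refl (G : MGraph) : Subdivides G G id
  | subdiv {G G' : MGraph} {ι : G.V → G'.V}
      (h : Subdivides G G' ι) (e₀ : G'.E) :
      Subdivides G (subdivide G' e₀) (fun v => Sum.inl (ι v))
  | iso {G G' : MGraph} {ι : G.V → G'.V}
      (h : Subdivides G G' ι) {G'' : MGraph} (φ : Iso G' G'') :
      Subdivides G G'' (fun v => φ.eV (ι v))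

/-- A finite harmonic (indexed) morphism of multigraphs: vertices map to
vertices, edges to edges (compatibly with endpoints), each edge `e` carries a
positive index `r e`, and around each vertex `v` the sums
`Σ_{e ∋ v, fE e = e'} r e` have a common value `m v > 0` for all edges `e'`
incident to the image of `v`. -/
structure FinHarm (G T : MGraph) where
  fV : G.V → T.V
  fE : G.E → T.E
  r : G.E → ℕ
  r_pos : ∀ e, 0 < r e
  ends : ∀ e, T.Joins (fE e) (fV (G.fst e)) (fV (G.snd e))
  m : G.V → ℕ
  m_pos : ∀ v, 0 < m v
  harm : ∀ v : G.V, ∀ e' : T.E, T.Inc e' (fV v) →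
    m v = ∑ e ∈ Finset.univ.filter (fun e => G.Inc e v ∧ fE e = e'), r e

/-- `φ` has degree `d`: over every vertex the `m`'s sum to `d` and over every
edge the indices sum to `d`. -/
def FinHarm.IsDegree {G T : MGraph} (φ : FinHarm G T) (d : ℕ) : Prop :=
  (∀ v' : T.V, ∑ v ∈ Finset.univ.filter (fun v => φ.fV v = v'), φ.m v = d) ∧
  (∀ e' : T.E, ∑ e ∈ Finset.univ.filter (fun e => φ.fE e = e'), φ.r e = d)

/-- The set of degrees of finite harmonic morphisms from refinements of `G` to
trees; the stable gonality `sgon(G)` is the least element of this set. -/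
def sgonSet (G : MGraph) : Set ℕ :=
  {d | ∃ (G' T : MGraph) (ι : G.V → G'.V) (p : G'.E → Option G.E),
        Refines G G' ι p ∧ G'.Loopless ∧ T.IsTree ∧
        ∃ φ : FinHarm G' T, φ.IsDegree d}

/-- `|φ⁻¹(S) ∩ V(G)|` for `S ⊆ V(T)`, `G'` a refinement of `G` via `ι`,
and `φ : G' → T`. -/
def pushCount {G G' T : MGraph} (ι : G.V → G'.V) (φ : FinHarm G' T) (S : Set T.V) : ℕ :=
  (Finset.univ.filter (fun v : G.V => φ.fV (ι v) ∈ S)).card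

/-- The pushforward measure `φ_* μ_G (S) = |φ⁻¹(S) ∩ V(G)| / |G|`. -/
def pushMeasure {G G' T : MGraph} (ι : G.V → G'.V) (φ : FinHarm G' T) (S : Set T.V) : ℝ :=
  (pushCount ι φ S : ℝ) / (Fintype.card G.V : ℝ)

/-- The size of an edge `e` of `T` with respect to the pushforward measure
`φ_* μ_G`. -/
def pushEdgeSize {G G' T : MGraph} (ι : G.V → G'.V) (φ : FinHarm G' T) (e : T.E) : ℝ :=
  min (pushMeasure ι φ (T.edgeSide e (T.fst e))) (pushMeasure ι φ (T.edgeSide e (T.snd e)))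

/-- The measured tree `(T, φ_* μ_G)` is `c`-thick. -/
def PushThick {G G' T : MGraph} (ι : G.V → G'.V) (φ : FinHarm G' T) (c : ℝ) : Prop :=
  ∀ x : T.V, ∃ y : T.V, y ≠ x ∧ c ≤ pushMeasure ι φ (T.vertexSide x y)

end MGraph

open MGraph
namespace MGraph

lemma Joins.symm' {G : MGraph} {e : G.E} {x y : G.V} (h : G.Joins e x y) : G.Joins e y x := by
  rcases h with ⟨h1, h2⟩ | ⟨h1, h2⟩
  · exact Or.inr ⟨h1, h2⟩
  · exact Or.inl ⟨h1, h2⟩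

def Iso.symm {G H : MGraph} (φ : Iso G H) : Iso H G where
  eV := φ.eV.symm
  eE := φ.eE.symm
  ends := by
    intro e
    have h := φ.ends (φ.eE.symm e)
    rw [Equiv.apply_symm_apply] at h
    rcases h with ⟨h1, h2⟩ | ⟨h1, h2⟩
    · exact Or.inl ⟨by simp [h1], by simp [h2]⟩
    · exact Or.inr ⟨by simp [h2], by simp [h1]⟩

lemma Iso.refines {G H : MGraph} (φ : Iso G H) :
    ∃ ι p, Refines G H ι p :=
  ⟨_, _, (Refines.refl G).iso φ⟩

lemma Refines.trans' {B C : MGraph} {ι₂ : B.V → C.V} {p₂ : C.E → Option B.E}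
    (h₂ : Refines B C ι₂ p₂) :
    ∀ {A : MGraph} {ι₁ : A.V → B.V} {p₁ : B.E → Option A.E},
      Refines A B ι₁ p₁ → ∃ ι p, Refines A C ι p := by
  induction h₂ with
  | refl => exact fun h => ⟨_, _, h⟩
  | subdiv h e₀ ih =>
      intro A ι₁ p₁ h₁
      obtain ⟨ι, p, hh⟩ := ih h₁
      exact ⟨_, _, hh.subdiv e₀⟩
  | leaf h v₀ ih =>
      intro A ι₁ p₁ h₁
      obtain ⟨ι, p, hh⟩ := ih h₁
      exact ⟨_, _, hh.leaf v₀⟩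
  | iso h φ ih =>
      intro A ι₁ p₁ h₁
      obtain ⟨ι, p, hh⟩ := ih h₁
      exact ⟨_, _, hh.iso φ⟩

lemma Refines.prov {G H : MGraph} {ι : G.V → H.V} {p : H.E → Option G.E}
    (h : Refines G H ι p) : ∀ e₀ : G.E, ∃ ehat : H.E, p ehat = some e₀ := by
  induction h with
  | refl => exact fun e₀ => ⟨e₀, rfl⟩
  | subdiv h e₁ ih =>
      intro e₀
      obtain ⟨ehat, hehat⟩ := ih e₀
      by_cases hc : ehat = e₁
      · exact ⟨Sum.inr true, by subst hc; simpa using hehat⟩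
      · exact ⟨Sum.inl ⟨ehat, hc⟩, by simpa using hehat⟩
  | leaf h v₀ ih =>
      intro e₀
      obtain ⟨ehat, hehat⟩ := ih e₀
      exact ⟨Sum.inl ehat, by simpa using hehat⟩
  | iso h φ ih =>
      intro e₀
      obtain ⟨ehat, hehat⟩ := ih e₀
      exact ⟨φ.eE ehat, by simpa using hehat⟩

end MGraph
namespace MGraph

/-- Two subdivisions at distinct edges commute. -/
def isoSS (K : MGraph) (a b : K.E) (hab : a ≠ b) :
    Iso (subdivide (subdivide K a) (Sum.inl ⟨b, Ne.symm hab⟩))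
        (subdivide (subdivide K b) (Sum.inl ⟨a, hab⟩)) where
  eV :=
  { toFun := fun x => match x with
      | Sum.inl (Sum.inl v) => Sum.inl (Sum.inl v)
      | Sum.inl (Sum.inr u) => Sum.inr u
      | Sum.inr u => Sum.inl (Sum.inr u)
    invFun := fun x => match x with
      | Sum.inl (Sum.inl v) => Sum.inl (Sum.inl v)
      | Sum.inl (Sum.inr u) => Sum.inr u
      | Sum.inr u => Sum.inl (Sum.inr u)
    left_inv := by rintro ((v | u) | u) <;> rfl
    right_inv := by rintro ((v | u) | u) <;> rfl }
  eE :=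
  { toFun := fun x => match x with
      | Sum.inl ⟨Sum.inl e1, hne⟩ =>
          Sum.inl ⟨Sum.inl ⟨e1.1, fun h => hne (congrArg Sum.inl (Subtype.ext h))⟩,
            fun h => e1.2 (congrArg Subtype.val (Sum.inl.inj h))⟩
      | Sum.inl ⟨Sum.inr bb, _⟩ => Sum.inr bb
      | Sum.inr bb => Sum.inl ⟨Sum.inr bb, fun h => nomatch h⟩
    invFun := fun x => match x with
      | Sum.inl ⟨Sum.inl e1, hne⟩ =>
          Sum.inl ⟨Sum.inl ⟨e1.1, fun h => hne (congrArg Sum.inl (Subtype.ext h))⟩,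
            fun h => e1.2 (congrArg Subtype.val (Sum.inl.inj h))⟩
      | Sum.inl ⟨Sum.inr bb, _⟩ => Sum.inr bb
      | Sum.inr bb => Sum.inl ⟨Sum.inr bb, fun h => nomatch h⟩
    left_inv := by rintro (⟨(⟨e, he⟩ | bb), hne⟩ | bb) <;> rfl
    right_inv := by rintro (⟨(⟨e, he⟩ | bb), hne⟩ | bb) <;> rfl }
  ends := by
    rintro (⟨(⟨e, he⟩ | (_ | _)), hne⟩ | (_ | _)) <;> exact Or.inl ⟨rfl, rfl⟩

/-- A subdivision and a leaf addition commute. -/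
def isoSL (K : MGraph) (a : K.E) (v : K.V) :
    Iso (addLeaf (subdivide K a) (Sum.inl v)) (subdivide (addLeaf K v) (Sum.inl a)) where
  eV :=
  { toFun := fun x => match x with
      | Sum.inl (Sum.inl w) => Sum.inl (Sum.inl w)
      | Sum.inl (Sum.inr u) => Sum.inr u
      | Sum.inr u => Sum.inl (Sum.inr u)
    invFun := fun x => match x with
      | Sum.inl (Sum.inl w) => Sum.inl (Sum.inl w)
      | Sum.inl (Sum.inr u) => Sum.inr u
      | Sum.inr u => Sum.inl (Sum.inr u)
    left_inv := by rintro ((v | u) | u) <;> rfl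
    right_inv := by rintro ((v | u) | u) <;> rfl }
  eE :=
  { toFun := fun x => match x with
      | Sum.inl (Sum.inl e1) => Sum.inl ⟨Sum.inl e1.1, fun h => e1.2 (Sum.inl.inj h)⟩
      | Sum.inl (Sum.inr bb) => Sum.inr bb
      | Sum.inr _ => Sum.inl ⟨Sum.inr (), fun h => nomatch h⟩
    invFun := fun x => match x with
      | Sum.inl ⟨Sum.inl e, hne⟩ => Sum.inl (Sum.inl ⟨e, fun h => hne (congrArg Sum.inl h)⟩)
      | Sum.inl ⟨Sum.inr _, _⟩ => Sum.inr ()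
      | Sum.inr bb => Sum.inl (Sum.inr bb)
    left_inv := by rintro ((⟨e, he⟩ | bb) | u) <;> rfl
    right_inv := by rintro (⟨(e | u), hne⟩ | bb) <;> rfl }
  ends := by
    rintro ((⟨e, he⟩ | (_ | _)) | u) <;> exact Or.inl ⟨rfl, rfl⟩

/-- Two leaf additions commute. -/
def isoLL (K : MGraph) (x y : K.V) :
    Iso (addLeaf (addLeaf K x) (Sum.inl y)) (addLeaf (addLeaf K y) (Sum.inl x)) where
  eV :=
  { toFun := fun z => match z with
      | Sum.inl (Sum.inl w) => Sum.inl (Sum.inl w)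
      | Sum.inl (Sum.inr u) => Sum.inr u
      | Sum.inr u => Sum.inl (Sum.inr u)
    invFun := fun z => match z with
      | Sum.inl (Sum.inl w) => Sum.inl (Sum.inl w)
      | Sum.inl (Sum.inr u) => Sum.inr u
      | Sum.inr u => Sum.inl (Sum.inr u)
    left_inv := by rintro ((v | u) | u) <;> rfl
    right_inv := by rintro ((v | u) | u) <;> rfl }
  eE :=
  { toFun := fun z => match z with
      | Sum.inl (Sum.inl e) => Sum.inl (Sum.inl e)
      | Sum.inl (Sum.inr u) => Sum.inr u
      | Sum.inr u => Sum.inl (Sum.inr u)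
    invFun := fun z => match z with
      | Sum.inl (Sum.inl e) => Sum.inl (Sum.inl e)
      | Sum.inl (Sum.inr u) => Sum.inr u
      | Sum.inr u => Sum.inl (Sum.inr u)
    left_inv := by rintro ((v | u) | u) <;> rfl
    right_inv := by rintro ((v | u) | u) <;> rfl }
  ends := by
    rintro ((e | u) | u) <;> exact Or.inl ⟨rfl, rfl⟩

/-- Transport a subdivision along an isomorphism. -/
def Iso.subdivideCongr {K L : MGraph} (φ : Iso K L) (a : K.E) :
    Iso (subdivide K a) (subdivide L (φ.eE a)) where
  eV := Equiv.sumCongr φ.eV (Equiv.refl Unit)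
  eE :=
  { toFun := fun x => match x with
      | Sum.inl e1 => Sum.inl ⟨φ.eE e1.1, fun h => e1.2 (φ.eE.injective h)⟩
      | Sum.inr bb => Sum.inr (if L.fst (φ.eE a) = φ.eV (K.fst a) then bb else !bb)
    invFun := fun x => match x with
      | Sum.inl e1 => Sum.inl ⟨φ.eE.symm e1.1, fun h => e1.2 (φ.eE.symm_apply_eq.mp h)⟩
      | Sum.inr bb => Sum.inr (if L.fst (φ.eE a) = φ.eV (K.fst a) then bb else !bb)
    left_inv := by
      rintro (⟨e, he⟩ | bb)
      · simp; rfl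
      · by_cases h : L.fst (φ.eE a) = φ.eV (K.fst a) <;> simp [h] <;> rfl
    right_inv := by
      rintro (⟨e, he⟩ | bb)
      · simp; rfl
      · by_cases h : L.fst (φ.eE a) = φ.eV (K.fst a) <;> simp [h] <;> rfl }
  ends := by
    rintro (⟨e, he⟩ | (_ | _))
    · rcases φ.ends e with ⟨h1, h2⟩ | ⟨h1, h2⟩
      · exact Or.inl ⟨congrArg Sum.inl h1, congrArg Sum.inl h2⟩
      · exact Or.inr ⟨congrArg Sum.inl h1, congrArg Sum.inl h2⟩
    · -- half-edge `false`
      by_cases hal : L.fst (φ.eE a) = φ.eV (K.fst a)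
      · simp only [hal, if_true]
        exact Or.inl ⟨congrArg Sum.inl hal, rfl⟩
      · simp only [hal, if_false]
        rcases φ.ends a with ⟨h1, h2⟩ | ⟨h1, h2⟩
        · exact absurd h1 hal
        · exact Or.inr ⟨rfl, congrArg Sum.inl h2⟩
    · -- half-edge `true`
      by_cases hal : L.fst (φ.eE a) = φ.eV (K.fst a)
      · simp only [hal, if_true]
        have h2 : L.snd (φ.eE a) = φ.eV (K.snd a) := by
          rcases φ.ends a with ⟨h1, h2⟩ | ⟨h1, h2⟩
          · exact h2
          · rw [h2, ← hal, h1]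
        exact Or.inl ⟨rfl, congrArg Sum.inl h2⟩
      · simp only [hal, if_false]
        rcases φ.ends a with ⟨h1, h2⟩ | ⟨h1, h2⟩
        · exact absurd h1 hal
        · exact Or.inr ⟨congrArg Sum.inl h1, rfl⟩

/-- Transport a leaf addition along an isomorphism. -/
def Iso.addLeafCongr {K L : MGraph} (φ : Iso K L) (v : K.V) :
    Iso (addLeaf K v) (addLeaf L (φ.eV v)) where
  eV := Equiv.sumCongr φ.eV (Equiv.refl Unit)
  eE := Equiv.sumCongr φ.eE (Equiv.refl Unit)
  ends := by
    rintro (e | u)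
    · rcases φ.ends e with ⟨h1, h2⟩ | ⟨h1, h2⟩
      · exact Or.inl ⟨congrArg Sum.inl h1, congrArg Sum.inl h2⟩
      · exact Or.inr ⟨congrArg Sum.inl h1, congrArg Sum.inl h2⟩
    · exact Or.inl ⟨rfl, rfl⟩

end MGraph
namespace MGraph

lemma Refines.push {G H : MGraph} {ι : G.V → H.V} {p : H.E → Option G.E}
    (h : Refines G H ι p) :
    ∀ (e₀ : G.E) (ehat : H.E), p ehat = some e₀ →
      ∃ ι' p', Refines (subdivide G e₀) (subdivide H ehat) ι' p' := by
  induction h with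
  | refl =>
      intro e₀ ehat hp
      cases Option.some.inj hp
      exact ⟨_, _, .refl _⟩
  | subdiv h e₁ ih =>
      intro e₀ ehat hp
      rcases ehat with ⟨e, he⟩ | bb
      · simp only [Sum.elim_inl] at hp
        obtain ⟨ι₂, p₂, h₂⟩ := ih e₀ e hp
        have h₃ := h₂.subdiv (Sum.inl ⟨e₁, Ne.symm he⟩)
        exact ⟨_, _, h₃.iso (isoSS _ e e₁ he)⟩
      · simp only [Sum.elim_inr] at hp
        obtain ⟨ι₂, p₂, h₂⟩ := ih e₀ e₁ hp
        exact ⟨_, _, h₂.subdiv (Sum.inr bb)⟩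
  | leaf h v₀ ih =>
      intro e₀ ehat hp
      rcases ehat with e | u
      · simp only [Sum.elim_inl] at hp
        obtain ⟨ι₂, p₂, h₂⟩ := ih e₀ e hp
        have h₃ := h₂.leaf (Sum.inl v₀)
        exact ⟨_, _, h₃.iso (isoSL _ e v₀)⟩
      · simp at hp
  | iso h φ ih =>
      intro e₀ ehat hp
      obtain ⟨ι₂, p₂, h₂⟩ := ih e₀ (φ.eE.symm ehat) hp
      have h₃ := h₂.iso (φ.subdivideCongr (φ.eE.symm ehat))
      rw [← Equiv.apply_symm_apply φ.eE ehat]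
      exact ⟨_, _, h₃⟩

lemma Refines.pushLeaf {G H : MGraph} {ι : G.V → H.V} {p : H.E → Option G.E}
    (h : Refines G H ι p) (v₀ : G.V) :
    ∃ ι' p', Refines (addLeaf G v₀) (addLeaf H (ι v₀)) ι' p' := by
  induction h with
  | refl => exact ⟨_, _, .refl _⟩
  | subdiv h e₁ ih =>
      obtain ⟨ι₂, p₂, h₂⟩ := ih
      have h₃ := h₂.subdiv (Sum.inl e₁)
      exact ⟨_, _, h₃.iso (isoSL _ e₁ _).symm⟩
  | leaf h w ih =>
      obtain ⟨ι₂, p₂, h₂⟩ := ih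
      have h₃ := h₂.leaf (Sum.inl w)
      exact ⟨_, _, h₃.iso (isoLL _ _ w)⟩
  | iso h φ ih =>
      obtain ⟨ι₂, p₂, h₂⟩ := ih
      exact ⟨_, _, h₂.iso (φ.addLeafCongr _)⟩

end MGraph
namespace MGraph

/-- Simultaneous subdivision of a set of edges. -/
@[reducible] def SubAll (K : MGraph) (F : Finset K.E) : MGraph where
  V := K.V ⊕ {e : K.E // e ∈ F}
  E := {e : K.E // e ∉ F} ⊕ ({e : K.E // e ∈ F} × Bool)
  fst := fun x => match x with
    | Sum.inl e => Sum.inl (K.fst e.1)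
    | Sum.inr (e, false) => Sum.inl (K.fst e.1)
    | Sum.inr (e, true) => Sum.inr e
  snd := fun x => match x with
    | Sum.inl e => Sum.inl (K.snd e.1)
    | Sum.inr (e, false) => Sum.inr e
    | Sum.inr (e, true) => Sum.inl (K.snd e.1)

/-- Simultaneous addition of one leaf at every vertex of a set. -/
@[reducible] def AddAll (K : MGraph) (S : Finset K.V) : MGraph where
  V := K.V ⊕ {v : K.V // v ∈ S}
  E := K.E ⊕ {v : K.V // v ∈ S}
  fst := Sum.elim (fun e => Sum.inl (K.fst e)) (fun v => Sum.inl v.1)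
  snd := Sum.elim (fun e => Sum.inl (K.snd e)) (fun v => Sum.inr v)

def isoSubAllSingle (K : MGraph) (a : K.E) : Iso (subdivide K a) (SubAll K {a}) where
  eV :=
  { toFun := fun x => match x with
      | Sum.inl v => Sum.inl v
      | Sum.inr _ => Sum.inr ⟨a, Finset.mem_singleton_self a⟩
    invFun := fun x => match x with
      | Sum.inl v => Sum.inl v
      | Sum.inr _ => Sum.inr ()
    left_inv := by rintro (v | u) <;> rfl
    right_inv := by
      rintro (v | ⟨e, he⟩)
      · rfl
      · cases Finset.mem_singleton.mp he; rfl }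
  eE :=
  { toFun := fun x => match x with
      | Sum.inl e => Sum.inl ⟨e.1, by simpa using e.2⟩
      | Sum.inr bb => Sum.inr (⟨a, Finset.mem_singleton_self a⟩, bb)
    invFun := fun x => match x with
      | Sum.inl e => Sum.inl ⟨e.1, by simpa using e.2⟩
      | Sum.inr (_, bb) => Sum.inr bb
    left_inv := by rintro (⟨e, he⟩ | bb) <;> rfl
    right_inv := by
      rintro (⟨e, he⟩ | ⟨⟨e, he⟩, bb⟩)
      · rfl
      · cases Finset.mem_singleton.mp he; rfl }
  ends := by
    rintro (⟨e, he⟩ | (_ | _)) <;> exact Or.inl ⟨rfl, rfl⟩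

def isoSubAllInsert (K : MGraph) (F : Finset K.E) (a : K.E) (ha : a ∉ F) :
    Iso (subdivide (SubAll K F) (Sum.inl ⟨a, ha⟩)) (SubAll K (insert a F)) where
  eV :=
  { toFun := fun x => match x with
      | Sum.inl (Sum.inl v) => Sum.inl v
      | Sum.inl (Sum.inr e) => Sum.inr ⟨e.1, Finset.mem_insert_of_mem e.2⟩
      | Sum.inr _ => Sum.inr ⟨a, Finset.mem_insert_self a F⟩
    invFun := fun x => match x with
      | Sum.inl v => Sum.inl (Sum.inl v)
      | Sum.inr e => if h : e.1 ∈ F then Sum.inl (Sum.inr ⟨e.1, h⟩) else Sum.inr ()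
    left_inv := by
      rintro ((v | ⟨e, he⟩) | u)
      · rfl
      · dsimp only; exact dif_pos he
      · dsimp only; exact dif_neg ha
    right_inv := by
      rintro (v | ⟨e, he⟩)
      · rfl
      · dsimp only
        by_cases h : e ∈ F
        · exact (dif_pos h).symm ▸ rfl
        · refine (dif_neg h).symm ▸ ?_
          rcases Finset.mem_insert.mp he with rfl | h2
          · rfl
          · exact absurd h2 h }
  eE :=
  { toFun := fun x => match x with
      | Sum.inl ⟨Sum.inl e, hne⟩ =>
          Sum.inl ⟨e.1, by
            intro hmem
            rcases Finset.mem_insert.mp hmem with h1 | h2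
            · exact hne (congrArg Sum.inl (Subtype.ext h1))
            · exact e.2 h2⟩
      | Sum.inl ⟨Sum.inr (e, bb), _⟩ => Sum.inr (⟨e.1, Finset.mem_insert_of_mem e.2⟩, bb)
      | Sum.inr bb => Sum.inr (⟨a, Finset.mem_insert_self a F⟩, bb)
    invFun := fun x => match x with
      | Sum.inl e =>
          Sum.inl ⟨Sum.inl ⟨e.1, fun h => e.2 (Finset.mem_insert_of_mem h)⟩, by
            intro h
            have he : e.1 = a := congrArg Subtype.val (Sum.inl.inj h)
            exact e.2 (by rw [he]; exact Finset.mem_insert_self a F)⟩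
      | Sum.inr (e, bb) =>
          if h : e.1 ∈ F then Sum.inl ⟨Sum.inr (⟨e.1, h⟩, bb), fun hq => nomatch hq⟩
          else Sum.inr bb
    left_inv := by
      rintro (⟨(⟨e, he⟩ | ⟨⟨e, he⟩, bb⟩), hne⟩ | bb)
      · rfl
      · dsimp only; exact dif_pos he
      · dsimp only; exact dif_neg ha
    right_inv := by
      rintro (⟨e, he⟩ | ⟨⟨e, he⟩, bb⟩)
      · rfl
      · dsimp only
        by_cases h : e ∈ F
        · exact (dif_pos h).symm ▸ rfl
        · refine (dif_neg h).symm ▸ ?_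
          rcases Finset.mem_insert.mp he with rfl | h2
          · rfl
          · exact absurd h2 h }
  ends := by
    rintro (⟨(⟨e, he⟩ | ⟨⟨e, he⟩, (_ | _)⟩), hne⟩ | (_ | _)) <;> exact Or.inl ⟨rfl, rfl⟩

def isoAddAllSingle (K : MGraph) (w : K.V) : Iso (addLeaf K w) (AddAll K {w}) where
  eV :=
  { toFun := fun x => match x with
      | Sum.inl v => Sum.inl v
      | Sum.inr _ => Sum.inr ⟨w, Finset.mem_singleton_self w⟩
    invFun := fun x => match x with
      | Sum.inl v => Sum.inl v
      | Sum.inr _ => Sum.inr ()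
    left_inv := by rintro (v | u) <;> rfl
    right_inv := by
      rintro (v | ⟨x, hx⟩)
      · rfl
      · cases Finset.mem_singleton.mp hx; rfl }
  eE :=
  { toFun := fun x => match x with
      | Sum.inl e => Sum.inl e
      | Sum.inr _ => Sum.inr ⟨w, Finset.mem_singleton_self w⟩
    invFun := fun x => match x with
      | Sum.inl e => Sum.inl e
      | Sum.inr _ => Sum.inr ()
    left_inv := by rintro (e | u) <;> rfl
    right_inv := by
      rintro (e | ⟨x, hx⟩)
      · rfl
      · cases Finset.mem_singleton.mp hx; rfl }
  ends := by
    rintro (e | u) <;> exact Or.inl ⟨rfl, rfl⟩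

def isoAddAllInsert (K : MGraph) (S : Finset K.V) (b : K.V) (hb : b ∉ S) :
    Iso (addLeaf (AddAll K S) (Sum.inl b)) (AddAll K (insert b S)) where
  eV :=
  { toFun := fun x => match x with
      | Sum.inl (Sum.inl v) => Sum.inl v
      | Sum.inl (Sum.inr v) => Sum.inr ⟨v.1, Finset.mem_insert_of_mem v.2⟩
      | Sum.inr _ => Sum.inr ⟨b, Finset.mem_insert_self b S⟩
    invFun := fun x => match x with
      | Sum.inl v => Sum.inl (Sum.inl v)
      | Sum.inr v => if h : v.1 ∈ S then Sum.inl (Sum.inr ⟨v.1, h⟩) else Sum.inr ()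
    left_inv := by
      rintro ((v | ⟨v, hv⟩) | u)
      · rfl
      · dsimp only; exact dif_pos hv
      · dsimp only; exact dif_neg hb
    right_inv := by
      rintro (v | ⟨v, hv⟩)
      · rfl
      · dsimp only
        by_cases h : v ∈ S
        · exact (dif_pos h).symm ▸ rfl
        · refine (dif_neg h).symm ▸ ?_
          rcases Finset.mem_insert.mp hv with rfl | h2
          · rfl
          · exact absurd h2 h }
  eE :=
  { toFun := fun x => match x with
      | Sum.inl (Sum.inl e) => Sum.inl e
      | Sum.inl (Sum.inr v) => Sum.inr ⟨v.1, Finset.mem_insert_of_mem v.2⟩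
      | Sum.inr _ => Sum.inr ⟨b, Finset.mem_insert_self b S⟩
    invFun := fun x => match x with
      | Sum.inl e => Sum.inl (Sum.inl e)
      | Sum.inr v => if h : v.1 ∈ S then Sum.inl (Sum.inr ⟨v.1, h⟩) else Sum.inr ()
    left_inv := by
      rintro ((e | ⟨v, hv⟩) | u)
      · rfl
      · dsimp only; exact dif_pos hv
      · dsimp only; exact dif_neg hb
    right_inv := by
      rintro (e | ⟨v, hv⟩)
      · rfl
      · dsimp only
        by_cases h : v ∈ S
        · exact (dif_pos h).symm ▸ rfl
        · refine (dif_neg h).symm ▸ ?_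
          rcases Finset.mem_insert.mp hv with rfl | h2
          · rfl
          · exact absurd h2 h }
  ends := by
    rintro ((e | ⟨v, hv⟩) | u) <;> exact Or.inl ⟨rfl, rfl⟩

lemma refines_subdivide_subAll (K : MGraph) (F : Finset K.E) (a : K.E) (ha : a ∈ F) :
    ∃ ι p, Refines (subdivide K a) (SubAll K F) ι p := by
  classical
  have aux : ∀ (F₂ : Finset K.E) (a : K.E), a ∉ F₂ →
      ∃ ι p, Refines (subdivide K a) (SubAll K (insert a F₂)) ι p := by
    intro F₂
    induction F₂ using Finset.induction_on with
    | empty => exact fun a _ => (isoSubAllSingle K a).refines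
    | @insert b F₂ hb ih =>
        intro a haIns
        have hab : a ≠ b := fun h => haIns (h ▸ Finset.mem_insert_self b F₂)
        have haF : a ∉ F₂ := fun h => haIns (Finset.mem_insert_of_mem h)
        obtain ⟨ι, p, h⟩ := ih a haF
        have hbmem : b ∉ insert a F₂ := by
          simp only [Finset.mem_insert, not_or]
          exact ⟨Ne.symm hab, hb⟩
        have h₂ := h.subdiv (Sum.inl ⟨b, hbmem⟩)
        have h₃ := h₂.iso (isoSubAllInsert K (insert a F₂) b hbmem)
        rw [Finset.insert_comm]
        exact ⟨_, _, h₃⟩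
  have := aux (F.erase a) a (Finset.notMem_erase a F)
  rwa [Finset.insert_erase ha] at this

lemma refines_addLeaf_addAll (K : MGraph) (S : Finset K.V) (w : K.V) (hw : w ∈ S) :
    ∃ ι p, Refines (addLeaf K w) (AddAll K S) ι p := by
  classical
  have aux : ∀ (S₂ : Finset K.V) (w : K.V), w ∉ S₂ →
      ∃ ι p, Refines (addLeaf K w) (AddAll K (insert w S₂)) ι p := by
    intro S₂
    induction S₂ using Finset.induction_on with
    | empty => exact fun w _ => (isoAddAllSingle K w).refines
    | @insert b S₂ hb ih =>
        intro w hwIns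
        have hwb : w ≠ b := fun h => hwIns (h ▸ Finset.mem_insert_self b S₂)
        have hwS : w ∉ S₂ := fun h => hwIns (Finset.mem_insert_of_mem h)
        obtain ⟨ι, p, h⟩ := ih w hwS
        have hbmem : b ∉ insert w S₂ := by
          simp only [Finset.mem_insert, not_or]
          exact ⟨Ne.symm hwb, hb⟩
        have h₂ := h.leaf (Sum.inl b)
        have h₃ := h₂.iso (isoAddAllInsert K (insert w S₂) b hbmem)
        rw [Finset.insert_comm]
        exact ⟨_, _, h₃⟩
  have := aux (S.erase w) w (Finset.notMem_erase w S)
  rwa [Finset.insert_erase hw] at this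

end MGraph
namespace MGraph

lemma card_ne_aux {α : Type} [Fintype α] (a : α) :
    Fintype.card {x : α // x ≠ a} = Fintype.card α - 1 := by
  classical
  have h := Fintype.card_subtype_compl (fun x : α => x = a)
  simp only [Fintype.card_subtype_eq] at h
  convert h using 2

def reachN (G : MGraph) (v₀ : G.V) : ℕ → G.V → Prop
  | 0, v => v = v₀
  | n + 1, v => ∃ u, reachN G v₀ n u ∧ G.Adj u v

lemma reach_exists (G : MGraph) (v₀ v : G.V) (h : Relation.ReflTransGen G.Adj v₀ v) :
    ∃ n, reachN G v₀ n v := by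
  induction h with
  | refl => exact ⟨0, rfl⟩
  | tail h hadj ih =>
      obtain ⟨n, hn⟩ := ih
      exact ⟨n + 1, _, hn, hadj⟩

lemma conn_card (G : MGraph) (hG : G.Connected) :
    Fintype.card G.V ≤ Fintype.card G.E + 1 := by
  classical
  obtain ⟨⟨v₀⟩, hconn⟩ := hG
  have hex : ∀ v, ∃ n, reachN G v₀ n v := fun v => reach_exists G v₀ v (hconn v₀ v)
  have key : ∀ v : G.V, v ≠ v₀ → ∃ e u, G.Joins e u v ∧ Nat.find (hex u) < Nat.find (hex v) := by
    intro v hv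
    have hd := Nat.find_spec (hex v)
    have h0 : Nat.find (hex v) ≠ 0 := by
      intro h
      rw [h] at hd
      exact hv hd
    obtain ⟨n, hn⟩ := Nat.exists_eq_succ_of_ne_zero h0
    rw [hn] at hd
    obtain ⟨u, hu, e, he⟩ := hd
    refine ⟨e, u, he, ?_⟩
    have hle : Nat.find (hex u) ≤ n := Nat.find_min' (hex u) hu
    omega
  choose e u hJoins hlt using fun (v : {v : G.V // v ≠ v₀}) => key v.1 v.2
  have hf : Function.Injective e := by
    intro v₁ v₂ hEq
    by_contra hne
    have hne' : v₁.1 ≠ v₂.1 := fun h => hne (Subtype.ext h)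
    have hJ1 := hJoins v₁
    have hJ2 := hJoins v₂
    rw [hEq] at hJ1
    have hl1 := hlt v₁
    have hl2 := hlt v₂
    rcases hJ1 with ⟨ha, hb⟩ | ⟨ha, hb⟩ <;> rcases hJ2 with ⟨hc, hd'⟩ | ⟨hc, hd'⟩
    · exact hne' (hb.symm.trans hd')
    · have h1 : u v₁ = v₂.1 := ha.symm.trans hc
      have h2 : v₁.1 = u v₂ := hb.symm.trans hd'
      rw [h1] at hl1
      rw [← h2] at hl2
      omega
    · have h1 : u v₁ = v₂.1 := hb.symm.trans hd'
      have h2 : v₁.1 = u v₂ := ha.symm.trans hc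
      rw [h1] at hl1
      rw [← h2] at hl2
      omega
    · exact hne' (ha.symm.trans hc)
  have h1 : Fintype.card {v : G.V // v ≠ v₀} ≤ Fintype.card G.E :=
    Fintype.card_le_of_injective e hf
  rw [card_ne_aux] at h1
  have h3 : 0 < Fintype.card G.V := @Fintype.card_pos _ _ ⟨v₀⟩
  omega

lemma tree_loopless {T : MGraph} (hT : T.IsTree) : T.Loopless := by
  intro ℓ hloop
  let T' : MGraph := ⟨T.V, {e : T.E // e ≠ ℓ}, fun e => T.fst e.1, fun e => T.snd e.1⟩
  have hconn' : T'.Connected := by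
    obtain ⟨hne, hconn⟩ := hT.1
    refine ⟨hne, fun x y => ?_⟩
    have h := hconn x y
    induction h with
    | refl => exact .refl
    | @tail b c h hadj ih =>
        obtain ⟨e, he⟩ := hadj
        by_cases hc : e = ℓ
        · subst hc
          have hbc : b = c := by
            rcases he with ⟨h1, h2⟩ | ⟨h1, h2⟩
            · rw [h1, h2] at hloop; exact hloop
            · rw [h2, h1] at hloop; exact hloop.symm
          rw [← hbc]
          exact ih
        · refine ih.tail ⟨⟨e, hc⟩, ?_⟩
          rcases he with ⟨h1, h2⟩ | ⟨h1, h2⟩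
          · exact Or.inl ⟨h1, h2⟩
          · exact Or.inr ⟨h1, h2⟩
  have hcard := conn_card T' hconn'
  have hE : Fintype.card T'.E = Fintype.card T.E - 1 := card_ne_aux ℓ
  have hV : Fintype.card T'.V = Fintype.card T.V := rfl
  have hpos : 0 < Fintype.card T.E := @Fintype.card_pos _ _ ⟨ℓ⟩
  have htc := hT.2
  omega

lemma subdivide_isTree {T : MGraph} (e' : T.E) (hT : T.IsTree) : (subdivide T e').IsTree := by
  obtain ⟨⟨⟨w⟩, hconn⟩, hcard⟩ := hT
  constructor
  · refine ⟨⟨Sum.inl w⟩, ?_⟩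
    have lift1 : ∀ a b : T.V, T.Adj a b →
        Relation.ReflTransGen (subdivide T e').Adj (Sum.inl a) (Sum.inl b) := by
      rintro a b ⟨e, he⟩
      by_cases hc : e = e'
      · subst hc
        rcases he with ⟨h1, h2⟩ | ⟨h1, h2⟩
        · exact Relation.ReflTransGen.head
            ⟨Sum.inr false, Or.inl ⟨congrArg Sum.inl h1, rfl⟩⟩
            (Relation.ReflTransGen.single ⟨Sum.inr true, Or.inl ⟨rfl, congrArg Sum.inl h2⟩⟩)
        · exact Relation.ReflTransGen.head
            ⟨Sum.inr true, Or.inr ⟨rfl, congrArg Sum.inl h2⟩⟩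
            (Relation.ReflTransGen.single ⟨Sum.inr false, Or.inr ⟨congrArg Sum.inl h1, rfl⟩⟩)
      · refine Relation.ReflTransGen.single ⟨Sum.inl ⟨e, hc⟩, ?_⟩
        rcases he with ⟨h1, h2⟩ | ⟨h1, h2⟩
        · exact Or.inl ⟨congrArg Sum.inl h1, congrArg Sum.inl h2⟩
        · exact Or.inr ⟨congrArg Sum.inl h1, congrArg Sum.inl h2⟩
    have lift : ∀ a b : T.V, Relation.ReflTransGen T.Adj a b →
        Relation.ReflTransGen (subdivide T e').Adj (Sum.inl a) (Sum.inl b) := by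
      intro a b h
      induction h with
      | refl => exact .refl
      | tail h hadj ih => exact ih.trans (lift1 _ _ hadj)
    rintro (x | ⟨⟩) (y | ⟨⟩)
    · exact lift x y (hconn x y)
    · exact (lift x (T.fst e') (hconn x _)).tail ⟨Sum.inr false, Or.inl ⟨rfl, rfl⟩⟩
    · exact (Relation.ReflTransGen.single
        ⟨Sum.inr false, Or.inr ⟨rfl, rfl⟩⟩).trans (lift _ y (hconn _ y))
    · exact .refl
  · have hV : Fintype.card (subdivide T e').V = Fintype.card T.V + 1 := by
      simp [subdivide]; exact Fintype.card_sum.trans (by simp)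
    have hE : Fintype.card (subdivide T e').E = (Fintype.card T.E - 1) + 2 := by
      simp [subdivide, card_ne_aux]; exact Fintype.card_sum.trans (by simp [card_ne_aux])
    have hpos : 0 < Fintype.card T.E := @Fintype.card_pos _ _ ⟨e'⟩
    omega

lemma addLeaf_isTree {T : MGraph} (w : T.V) (hT : T.IsTree) : (addLeaf T w).IsTree := by
  obtain ⟨⟨⟨v⟩, hconn⟩, hcard⟩ := hT
  constructor
  · refine ⟨⟨Sum.inl v⟩, ?_⟩
    have lift : ∀ a b : T.V, Relation.ReflTransGen T.Adj a b →
        Relation.ReflTransGen (addLeaf T w).Adj (Sum.inl a) (Sum.inl b) := by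
      intro a b h
      induction h with
      | refl => exact .refl
      | tail h hadj ih =>
          obtain ⟨e, he⟩ := hadj
          refine ih.tail ⟨Sum.inl e, ?_⟩
          rcases he with ⟨h1, h2⟩ | ⟨h1, h2⟩
          · exact Or.inl ⟨congrArg Sum.inl h1, congrArg Sum.inl h2⟩
          · exact Or.inr ⟨congrArg Sum.inl h1, congrArg Sum.inl h2⟩
    rintro (x | ⟨⟩) (y | ⟨⟩)
    · exact lift x y (hconn x y)
    · exact (lift x w (hconn x w)).tail ⟨Sum.inr (), Or.inl ⟨rfl, rfl⟩⟩
    · exact (Relation.ReflTransGen.single ⟨Sum.inr (), Or.inr ⟨rfl, rfl⟩⟩).trans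
        (lift w y (hconn w y))
    · exact .refl
  · have hV : Fintype.card (addLeaf T w).V = Fintype.card T.V + 1 := by simp [addLeaf]; exact Fintype.card_sum.trans (by simp)
    have hE : Fintype.card (addLeaf T w).E = Fintype.card T.E + 1 := by simp [addLeaf]; exact Fintype.card_sum.trans (by simp)
    omega

lemma subAll_loopless {K : MGraph} (F : Finset K.E) (h : K.Loopless) :
    (SubAll K F).Loopless := by
  rintro (e | ⟨e, (_ | _)⟩)
  · exact fun hq => h e.1 (Sum.inl.inj hq)
  · exact fun hq => nomatch hq
  · exact fun hq => nomatch hq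

lemma addAll_loopless {K : MGraph} (S : Finset K.V) (h : K.Loopless) :
    (AddAll K S).Loopless := by
  rintro (e | v)
  · exact fun hq => h e (Sum.inl.inj hq)
  · exact fun hq => nomatch hq

end MGraph
namespace MGraph

/-- Alignment of an edge over `e'` with the orientation of `e'`. -/
def alP {H T : MGraph} (φ : FinHarm H T) (e' : T.E) (e : H.E) : Prop :=
  T.fst e' = φ.fV (H.fst e)

lemma al_snd {H T : MGraph} (φ : FinHarm H T) (e' : T.E) (e : H.E)
    (he : φ.fE e = e') (hal : alP φ e' e) : T.snd e' = φ.fV (H.snd e) := by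
  have h := φ.ends e
  rw [he] at h
  rcases h with ⟨h1, h2⟩ | ⟨h1, h2⟩
  · exact h2
  · exact (h2.trans hal.symm).trans h1

lemma al_not {H T : MGraph} (φ : FinHarm H T) (e' : T.E) (e : H.E)
    (he : φ.fE e = e') (hal : ¬ alP φ e' e) :
    T.fst e' = φ.fV (H.snd e) ∧ T.snd e' = φ.fV (H.fst e) := by
  have h := φ.ends e
  rw [he] at h
  rcases h with ⟨h1, h2⟩ | ⟨h1, h2⟩
  · exact absurd h1 hal
  · exact ⟨h1, h2⟩

variable {H T : MGraph}

/-- The harmonic morphism obtained by subdividing one tree edge and all edges above it. -/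
def subdivMorph (φ : FinHarm H T) (e' : T.E) (F : Finset H.E)
    (hF : ∀ e, e ∈ F ↔ φ.fE e = e') (hH : H.Loopless) (hT : T.Loopless) :
    FinHarm (SubAll H F) (subdivide T e') where
  fV := fun x => match x with
    | Sum.inl v => Sum.inl (φ.fV v)
    | Sum.inr _ => Sum.inr ()
  fE := fun x => match x with
    | Sum.inl e => Sum.inl ⟨φ.fE e.1, fun h => e.2 ((hF e.1).mpr h)⟩
    | Sum.inr (e, bb) => Sum.inr (if alP φ e' e.1 then bb else !bb)
  r := fun x => match x with
    | Sum.inl e => φ.r e.1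
    | Sum.inr (e, _) => φ.r e.1
  r_pos := by rintro (e | ⟨e, bb⟩) <;> exact φ.r_pos _
  m := fun x => match x with
    | Sum.inl v => φ.m v
    | Sum.inr e => φ.r e.1
  m_pos := by
    rintro (v | e)
    · exact φ.m_pos _
    · exact φ.r_pos _
  ends := by
    rintro (e | ⟨e, bb⟩)
    · rcases φ.ends e.1 with ⟨h1, h2⟩ | ⟨h1, h2⟩
      · exact Or.inl ⟨congrArg Sum.inl h1, congrArg Sum.inl h2⟩
      · exact Or.inr ⟨congrArg Sum.inl h1, congrArg Sum.inl h2⟩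
    · have he : φ.fE e.1 = e' := (hF e.1).mp e.2
      cases bb
      · by_cases hal : alP φ e' e.1
        · dsimp only
          rw [if_pos hal]
          exact Or.inl ⟨congrArg Sum.inl hal, rfl⟩
        · dsimp only
          rw [if_neg hal]
          exact Or.inr ⟨rfl, congrArg Sum.inl (al_not φ e' e.1 he hal).2⟩
      · by_cases hal : alP φ e' e.1
        · dsimp only
          rw [if_pos hal]
          exact Or.inl ⟨rfl, congrArg Sum.inl (al_snd φ e' e.1 he hal)⟩
        · dsimp only
          rw [if_neg hal]
          exact Or.inr ⟨congrArg Sum.inl (al_not φ e' e.1 he hal).1, rfl⟩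
  harm := by
    rintro (v | e) e'' hInc
    · -- ordinary vertex
      rcases e'' with d' | bb
      · -- tree edge away from `e'`
        have hd' : T.Inc d'.1 (φ.fV v) := by
          rcases hInc with h | h
          · exact Or.inl (Sum.inl.inj h)
          · exact Or.inr (Sum.inl.inj h)
        dsimp only
        rw [φ.harm v d'.1 hd']
        refine Finset.sum_bij'
          (i := fun a ha => Sum.inl ⟨a, fun hmem => d'.2 (by
            rw [← (Finset.mem_filter.mp ha).2.2]; exact (hF a).mp hmem)⟩)
          (j := fun x _ => Sum.elim (fun e => e.1) (fun z => z.1.1) x)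
          ?_ ?_ ?_ ?_ ?_
        · intro a ha
          obtain ⟨-, hIncA, hfEA⟩ := Finset.mem_filter.mp ha
          refine Finset.mem_filter.mpr ⟨Finset.mem_univ _, ?_, ?_⟩
          · rcases hIncA with h | h
            · exact Or.inl (congrArg Sum.inl h)
            · exact Or.inr (congrArg Sum.inl h)
          · exact congrArg Sum.inl (Subtype.ext hfEA)
        · intro x hx
          obtain ⟨-, hIncX, hfEX⟩ := Finset.mem_filter.mp hx
          rcases x with e | ⟨e, c⟩
          · refine Finset.mem_filter.mpr ⟨Finset.mem_univ _, ?_, ?_⟩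
            · rcases hIncX with h | h
              · exact Or.inl (Sum.inl.inj h)
              · exact Or.inr (Sum.inl.inj h)
            · exact congrArg Subtype.val (Sum.inl.inj hfEX)
          · exact nomatch hfEX
        · intro a ha; rfl
        · intro x hx
          obtain ⟨-, hIncX, hfEX⟩ := Finset.mem_filter.mp hx
          rcases x with e | ⟨e, c⟩
          · rfl
          · exact nomatch hfEX
        · intro a ha; rfl
      · -- tree half-edges
        cases bb
        · -- half-edge `false`, incident to `fst e'`
          have hfst : T.fst e' = φ.fV v := by
            rcases hInc with h | h
            · exact Sum.inl.inj h
            · exact nomatch h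
          dsimp only
          rw [φ.harm v e' (Or.inl hfst)]
          refine Finset.sum_bij'
            (i := fun a ha => if H.fst a = v
              then Sum.inr (⟨a, (hF a).mpr (Finset.mem_filter.mp ha).2.2⟩, false)
              else Sum.inr (⟨a, (hF a).mpr (Finset.mem_filter.mp ha).2.2⟩, true))
            (j := fun x _ => Sum.elim (fun e => e.1) (fun z => z.1.1) x)
            ?_ ?_ ?_ ?_ ?_
          · intro a ha
            obtain ⟨-, hIncA, hfEA⟩ := Finset.mem_filter.mp ha
            by_cases hfa : H.fst a = v
            · rw [if_pos hfa]
              refine Finset.mem_filter.mpr ⟨Finset.mem_univ _, Or.inl (congrArg Sum.inl hfa), ?_⟩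
              have hal : alP φ e' a := by
                unfold alP; rw [hfa]; exact hfst
              dsimp only; rw [if_pos hal]
            · rw [if_neg hfa]
              have hsa : H.snd a = v := hIncA.resolve_left hfa
              refine Finset.mem_filter.mpr ⟨Finset.mem_univ _, Or.inr (congrArg Sum.inl hsa), ?_⟩
              have hal : ¬ alP φ e' a := by
                intro hal
                have h2 := al_snd φ e' a hfEA hal
                rw [hsa, ← hfst] at h2
                exact hT e' h2.symm
              dsimp only; rw [if_neg hal]; rfl
          · intro x hx
            obtain ⟨-, hIncX, hfEX⟩ := Finset.mem_filter.mp hx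
            rcases x with e | ⟨e, c⟩
            · exact nomatch hfEX
            · refine Finset.mem_filter.mpr ⟨Finset.mem_univ _, ?_, (hF e.1).mp e.2⟩
              cases c
              · rcases hIncX with h | h
                · exact Or.inl (Sum.inl.inj h)
                · exact nomatch h
              · rcases hIncX with h | h
                · exact nomatch h
                · exact Or.inr (Sum.inl.inj h)
          · intro a ha
            by_cases hfa : H.fst a = v
            · simp [hfa]
            · simp [hfa]
          · intro x hx
            obtain ⟨-, hIncX, hfEX⟩ := Finset.mem_filter.mp hx
            rcases x with e | ⟨e, c⟩
            · exact nomatch hfEX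
            · cases c
              · have hfa : H.fst e.1 = v := by
                  rcases hIncX with h | h
                  · exact Sum.inl.inj h
                  · exact nomatch h
                simp only [Sum.elim_inr]
                exact if_pos hfa
              · have hsa : H.snd e.1 = v := by
                  rcases hIncX with h | h
                  · exact nomatch h
                  · exact Sum.inl.inj h
                have hfa : H.fst e.1 ≠ v := by
                  intro hfa
                  exact hH e.1 (hfa.trans hsa.symm)
                simp only [Sum.elim_inr]
                exact if_neg hfa
          · intro a ha
            by_cases hfa : H.fst a = v
            · simp [hfa]
            · simp [hfa]
        · -- half-edge `true`, incident to `snd e'`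
          have hsnd : T.snd e' = φ.fV v := by
            rcases hInc with h | h
            · exact nomatch h
            · exact Sum.inl.inj h
          dsimp only
          rw [φ.harm v e' (Or.inr hsnd)]
          refine Finset.sum_bij'
            (i := fun a ha => if H.snd a = v
              then Sum.inr (⟨a, (hF a).mpr (Finset.mem_filter.mp ha).2.2⟩, true)
              else Sum.inr (⟨a, (hF a).mpr (Finset.mem_filter.mp ha).2.2⟩, false))
            (j := fun x _ => Sum.elim (fun e => e.1) (fun z => z.1.1) x)
            ?_ ?_ ?_ ?_ ?_
          · intro a ha
            obtain ⟨-, hIncA, hfEA⟩ := Finset.mem_filter.mp ha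
            by_cases hsa : H.snd a = v
            · rw [if_pos hsa]
              refine Finset.mem_filter.mpr ⟨Finset.mem_univ _, Or.inr (congrArg Sum.inl hsa), ?_⟩
              have hal : alP φ e' a := by
                by_contra hal
                have h2 := (al_not φ e' a hfEA hal).1
                rw [hsa, ← hsnd] at h2
                exact hT e' h2
              dsimp only; rw [if_pos hal]
            · rw [if_neg hsa]
              have hfa : H.fst a = v := hIncA.resolve_right hsa
              refine Finset.mem_filter.mpr ⟨Finset.mem_univ _, Or.inl (congrArg Sum.inl hfa), ?_⟩
              have hal : ¬ alP φ e' a := by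
                intro hal
                unfold alP at hal
                rw [hfa, ← hsnd] at hal
                exact hT e' hal
              dsimp only; rw [if_neg hal]; rfl
          · intro x hx
            obtain ⟨-, hIncX, hfEX⟩ := Finset.mem_filter.mp hx
            rcases x with e | ⟨e, c⟩
            · exact nomatch hfEX
            · refine Finset.mem_filter.mpr ⟨Finset.mem_univ _, ?_, (hF e.1).mp e.2⟩
              cases c
              · rcases hIncX with h | h
                · exact Or.inl (Sum.inl.inj h)
                · exact nomatch h
              · rcases hIncX with h | h
                · exact nomatch h
                · exact Or.inr (Sum.inl.inj h)
          · intro a ha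
            by_cases hsa : H.snd a = v
            · simp [hsa]
            · simp [hsa]
          · intro x hx
            obtain ⟨-, hIncX, hfEX⟩ := Finset.mem_filter.mp hx
            rcases x with e | ⟨e, c⟩
            · exact nomatch hfEX
            · cases c
              · have hfa : H.fst e.1 = v := by
                  rcases hIncX with h | h
                  · exact Sum.inl.inj h
                  · exact nomatch h
                have hsa : H.snd e.1 ≠ v := by
                  intro hsa
                  exact hH e.1 (hfa.trans hsa.symm)
                simp only [Sum.elim_inr]
                exact if_neg hsa
              · have hsa : H.snd e.1 = v := by
                  rcases hIncX with h | h
                  · exact nomatch h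
                  · exact Sum.inl.inj h
                simp only [Sum.elim_inr]
                exact if_pos hsa
          · intro a ha
            by_cases hsa : H.snd a = v
            · simp [hsa]
            · simp [hsa]
    · -- midpoint vertex
      rcases e'' with d' | bb
      · rcases hInc with h | h <;> exact nomatch h
      · dsimp only
        refine Eq.trans ?_ (Finset.sum_eq_single_of_mem
          (Sum.inr (e, if alP φ e' e.1 then bb else !bb)) ?hmem ?hzero).symm
        case hmem =>
          refine Finset.mem_filter.mpr ⟨Finset.mem_univ _, ?_, ?_⟩
          · by_cases hal : alP φ e' e.1 <;> cases bb
            · rw [if_pos hal]; exact Or.inr rfl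
            · rw [if_pos hal]; exact Or.inl rfl
            · rw [if_neg hal]; exact Or.inl rfl
            · rw [if_neg hal]; exact Or.inr rfl
          · by_cases hal : alP φ e' e.1
            · rw [if_pos hal]; dsimp only; rw [if_pos hal]
            · rw [if_neg hal]; dsimp only; rw [if_neg hal, Bool.not_not]
        case hzero =>
          intro x hx hne
          exfalso
          apply hne
          obtain ⟨-, hIncX, hfEX⟩ := Finset.mem_filter.mp hx
          rcases x with e₂ | ⟨e₂, c⟩
          · exact nomatch hfEX
          · have he2 : e₂ = e := by
              cases c
              · rcases hIncX with h | h
                · exact nomatch h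
                · exact Sum.inr.inj h
              · rcases hIncX with h | h
                · exact Sum.inr.inj h
                · exact nomatch h
            subst he2
            have hc : (if alP φ e' e₂.1 then c else !c) = bb := Sum.inr.inj hfEX
            by_cases hal : alP φ e' e₂.1
            · rw [if_pos hal] at hc
              rw [if_pos hal, ← hc]
            · rw [if_neg hal] at hc
              rw [if_neg hal, ← hc, Bool.not_not]
        rfl

end MGraph
namespace MGraph

lemma subdivMorph_isDegree {H T : MGraph} (φ : FinHarm H T) (e' : T.E) (F : Finset H.E)
    (hF : ∀ e, e ∈ F ↔ φ.fE e = e') (hH : H.Loopless) (hT : T.Loopless)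
    {d : ℕ} (hd : φ.IsDegree d) :
    (subdivMorph φ e' F hF hH hT).IsDegree d := by
  constructor
  · rintro (w | u)
    · rw [← hd.1 w]
      dsimp only [subdivMorph]
      refine (Finset.sum_bij (i := fun a _ => Sum.inl a) ?_ ?_ ?_ ?_).symm
      · intro a ha
        exact Finset.mem_filter.mpr ⟨Finset.mem_univ _,
          congrArg Sum.inl (Finset.mem_filter.mp ha).2⟩
      · intro a₁ _ a₂ _ h
        exact Sum.inl.inj h
      · rintro (v | e) hb
        · exact ⟨v, Finset.mem_filter.mpr ⟨Finset.mem_univ _,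
            Sum.inl.inj (Finset.mem_filter.mp hb).2⟩, rfl⟩
        · exact absurd (Finset.mem_filter.mp hb).2 (fun h => nomatch h)
      · intro a ha; rfl
    · rw [← hd.2 e']
      dsimp only [subdivMorph]
      refine (Finset.sum_bij
        (i := fun a ha => Sum.inr (⟨a, (hF a).mpr (Finset.mem_filter.mp ha).2⟩ :
          {e : H.E // e ∈ F})) ?_ ?_ ?_ ?_).symm
      · intro a ha
        exact Finset.mem_filter.mpr ⟨Finset.mem_univ _, rfl⟩
      · intro a₁ _ a₂ _ h
        exact congrArg Subtype.val (Sum.inr.inj h)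
      · rintro (v | e) hb
        · exact absurd (Finset.mem_filter.mp hb).2 (fun h => nomatch h)
        · exact ⟨e.1, Finset.mem_filter.mpr ⟨Finset.mem_univ _, (hF e.1).mp e.2⟩, rfl⟩
      · intro a ha; rfl
  · rintro (d' | bb)
    · rw [← hd.2 d'.1]
      dsimp only [subdivMorph]
      refine (Finset.sum_bij
        (i := fun a ha => (Sum.inl ⟨a, fun hmem => d'.2 (by
          rw [← (Finset.mem_filter.mp ha).2]; exact (hF a).mp hmem)⟩ :
            {e : H.E // e ∉ F} ⊕ ({e : H.E // e ∈ F} × Bool))) ?_ ?_ ?_ ?_).symm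
      · intro a ha
        exact Finset.mem_filter.mpr ⟨Finset.mem_univ _,
          congrArg Sum.inl (Subtype.ext (Finset.mem_filter.mp ha).2)⟩
      · intro a₁ _ a₂ _ h
        exact congrArg Subtype.val (Sum.inl.inj h)
      · rintro (e | ⟨e, c⟩) hb
        · refine ⟨e.1, Finset.mem_filter.mpr ⟨Finset.mem_univ _,
            congrArg Subtype.val (Sum.inl.inj (Finset.mem_filter.mp hb).2)⟩, rfl⟩
        · exact absurd (Finset.mem_filter.mp hb).2 (fun h => nomatch h)
      · intro a ha; rfl
    · rw [← hd.2 e']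
      dsimp only [subdivMorph]
      refine (Finset.sum_bij
        (i := fun a ha => (Sum.inr (⟨a, (hF a).mpr (Finset.mem_filter.mp ha).2⟩,
          if alP φ e' a then bb else !bb) :
            {e : H.E // e ∉ F} ⊕ ({e : H.E // e ∈ F} × Bool))) ?_ ?_ ?_ ?_).symm
      · intro a ha
        refine Finset.mem_filter.mpr ⟨Finset.mem_univ _, ?_⟩
        by_cases hal : alP φ e' a
        · simp [hal]; rfl
        · simp [hal]; rfl
      · intro a₁ _ a₂ _ h
        exact congrArg (fun z => Subtype.val (Prod.fst z)) (Sum.inr.inj h)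
      · rintro (e | ⟨e, c⟩) hb
        · exact absurd (Finset.mem_filter.mp hb).2 (fun h => nomatch h)
        · refine ⟨e.1, Finset.mem_filter.mpr ⟨Finset.mem_univ _, (hF e.1).mp e.2⟩, ?_⟩
          have hc : (if alP φ e' e.1 then c else !c) = bb :=
            Sum.inr.inj (Finset.mem_filter.mp hb).2
          by_cases hal : alP φ e' e.1
          · rw [if_pos hal] at hc
            simp [hal, hc]
          · rw [if_neg hal] at hc
            simp [hal, ← hc, Bool.not_not]
      · intro a ha
        rfl

end MGraph
namespace MGraph

/-- The harmonic morphism obtained by adding a leaf at the tree vertex `w'` and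
at every vertex above it. -/
def leafMorph {H T : MGraph} (φ : FinHarm H T) (w' : T.V) (S : Finset H.V)
    (hS : ∀ v, v ∈ S ↔ φ.fV v = w') : FinHarm (AddAll H S) (addLeaf T w') where
  fV := Sum.elim (fun v => Sum.inl (φ.fV v)) (fun _ => Sum.inr ())
  fE := Sum.elim (fun e => Sum.inl (φ.fE e)) (fun _ => Sum.inr ())
  r := Sum.elim φ.r (fun z => φ.m z.1)
  r_pos := by
    rintro (e | z)
    · exact φ.r_pos e
    · exact φ.m_pos z.1
  ends := by
    rintro (e | z)
    · rcases φ.ends e with ⟨h1, h2⟩ | ⟨h1, h2⟩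
      · exact Or.inl ⟨congrArg Sum.inl h1, congrArg Sum.inl h2⟩
      · exact Or.inr ⟨congrArg Sum.inl h1, congrArg Sum.inl h2⟩
    · exact Or.inl ⟨congrArg Sum.inl ((hS z.1).mp z.2).symm, rfl⟩
  m := Sum.elim φ.m (fun z => φ.m z.1)
  m_pos := by
    rintro (v | z)
    · exact φ.m_pos v
    · exact φ.m_pos z.1
  harm := by
    rintro (v | z) e'' hInc
    · rcases e'' with d' | u
      · have hd' : T.Inc d' (φ.fV v) := by
          rcases hInc with h | h
          · exact Or.inl (Sum.inl.inj h)
          · exact Or.inr (Sum.inl.inj h)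
        dsimp only [Sum.elim_inl]
        rw [φ.harm v d' hd']
        refine Finset.sum_bij (i := fun a _ => (Sum.inl a : H.E ⊕ {v : H.V // v ∈ S}))
          ?_ ?_ ?_ ?_
        · intro a ha
          obtain ⟨-, hIncA, hfEA⟩ := Finset.mem_filter.mp ha
          refine Finset.mem_filter.mpr ⟨Finset.mem_univ _, ?_, congrArg Sum.inl hfEA⟩
          rcases hIncA with h | h
          · exact Or.inl (congrArg Sum.inl h)
          · exact Or.inr (congrArg Sum.inl h)
        · intro a₁ _ a₂ _ h
          exact Sum.inl.inj h
        · rintro (e | z₂) hb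
          · obtain ⟨-, hIncB, hfEB⟩ := Finset.mem_filter.mp hb
            refine ⟨e, Finset.mem_filter.mpr ⟨Finset.mem_univ _, ?_,
              Sum.inl.inj hfEB⟩, rfl⟩
            rcases hIncB with h | h
            · exact Or.inl (Sum.inl.inj h)
            · exact Or.inr (Sum.inl.inj h)
          · exact absurd (Finset.mem_filter.mp hb).2.2 (fun h => nomatch h)
        · intro a ha; rfl
      · have hw : φ.fV v = w' := by
          rcases hInc with h | h
          · exact (Sum.inl.inj h).symm
          · exact absurd h (fun h => nomatch h)
        dsimp only [Sum.elim_inl]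
        refine Eq.trans ?_ (Finset.sum_eq_single_of_mem
          (Sum.inr (⟨v, (hS v).mpr hw⟩ : {v : H.V // v ∈ S})) ?hmem ?hzero).symm
        case hmem =>
          exact Finset.mem_filter.mpr ⟨Finset.mem_univ _, Or.inl rfl, rfl⟩
        case hzero =>
          intro x hx hne
          exfalso
          apply hne
          obtain ⟨-, hIncX, hfEX⟩ := Finset.mem_filter.mp hx
          rcases x with e | z₂
          · exact absurd hfEX (fun h => nomatch h)
          · rcases hIncX with h | h
            · exact congrArg Sum.inr (Subtype.ext (Sum.inl.inj h))
            · exact absurd h (fun h => nomatch h)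
        rfl
    · rcases e'' with d' | u
      · exfalso
        rcases hInc with h | h <;> exact nomatch h
      · dsimp only [Sum.elim_inr]
        refine Eq.trans ?_ (Finset.sum_eq_single_of_mem
          (Sum.inr z : H.E ⊕ {v : H.V // v ∈ S}) ?hmem ?hzero).symm
        case hmem =>
          exact Finset.mem_filter.mpr ⟨Finset.mem_univ _, Or.inr rfl, rfl⟩
        case hzero =>
          intro x hx hne
          exfalso
          apply hne
          obtain ⟨-, hIncX, hfEX⟩ := Finset.mem_filter.mp hx
          rcases x with e | z₂
          · rcases hIncX with h | h <;> exact nomatch h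
          · rcases hIncX with h | h
            · exact absurd h (fun h => nomatch h)
            · exact congrArg Sum.inr (Sum.inr.inj h)
        rfl

lemma leafMorph_isDegree {H T : MGraph} (φ : FinHarm H T) (w' : T.V) (S : Finset H.V)
    (hS : ∀ v, v ∈ S ↔ φ.fV v = w') {d : ℕ} (hd : φ.IsDegree d) :
    (leafMorph φ w' S hS).IsDegree d := by
  constructor
  · rintro (w | u)
    · rw [← hd.1 w]
      dsimp only [leafMorph]
      refine (Finset.sum_bij (i := fun a _ => (Sum.inl a : H.V ⊕ {v : H.V // v ∈ S}))
        ?_ ?_ ?_ ?_).symm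
      · intro a ha
        exact Finset.mem_filter.mpr ⟨Finset.mem_univ _,
          congrArg Sum.inl (Finset.mem_filter.mp ha).2⟩
      · intro a₁ _ a₂ _ h
        exact Sum.inl.inj h
      · rintro (v | z) hb
        · exact ⟨v, Finset.mem_filter.mpr ⟨Finset.mem_univ _,
            Sum.inl.inj (Finset.mem_filter.mp hb).2⟩, rfl⟩
        · exact absurd (Finset.mem_filter.mp hb).2 (fun h => nomatch h)
      · intro a ha; rfl
    · rw [← hd.1 w']
      dsimp only [leafMorph]
      refine (Finset.sum_bij (i := fun a ha =>
        (Sum.inr ⟨a, (hS a).mpr (Finset.mem_filter.mp ha).2⟩ : H.V ⊕ {v : H.V // v ∈ S}))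
        ?_ ?_ ?_ ?_).symm
      · intro a ha
        exact Finset.mem_filter.mpr ⟨Finset.mem_univ _, rfl⟩
      · intro a₁ _ a₂ _ h
        exact congrArg Subtype.val (Sum.inr.inj h)
      · rintro (v | z) hb
        · exact absurd (Finset.mem_filter.mp hb).2 (fun h => nomatch h)
        · exact ⟨z.1, Finset.mem_filter.mpr ⟨Finset.mem_univ _, (hS z.1).mp z.2⟩, rfl⟩
      · intro a ha; rfl
  · rintro (d' | u)
    · rw [← hd.2 d']
      dsimp only [leafMorph]
      refine (Finset.sum_bij (i := fun a _ => (Sum.inl a : H.E ⊕ {v : H.V // v ∈ S}))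
        ?_ ?_ ?_ ?_).symm
      · intro a ha
        exact Finset.mem_filter.mpr ⟨Finset.mem_univ _,
          congrArg Sum.inl (Finset.mem_filter.mp ha).2⟩
      · intro a₁ _ a₂ _ h
        exact Sum.inl.inj h
      · rintro (e | z) hb
        · exact ⟨e, Finset.mem_filter.mpr ⟨Finset.mem_univ _,
            Sum.inl.inj (Finset.mem_filter.mp hb).2⟩, rfl⟩
        · exact absurd (Finset.mem_filter.mp hb).2 (fun h => nomatch h)
      · intro a ha; rfl
    · rw [← hd.1 w']
      dsimp only [leafMorph]
      refine (Finset.sum_bij (i := fun a ha =>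
        (Sum.inr ⟨a, (hS a).mpr (Finset.mem_filter.mp ha).2⟩ : H.E ⊕ {v : H.V // v ∈ S}))
        ?_ ?_ ?_ ?_).symm
      · intro a ha
        exact Finset.mem_filter.mpr ⟨Finset.mem_univ _, rfl⟩
      · intro a₁ _ a₂ _ h
        exact congrArg Subtype.val (Sum.inr.inj h)
      · rintro (e | z) hb
        · exact absurd (Finset.mem_filter.mp hb).2 (fun h => nomatch h)
        · exact ⟨z.1, Finset.mem_filter.mpr ⟨Finset.mem_univ _, (hS z.1).mp z.2⟩, rfl⟩
      · intro a ha; rfl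

end MGraph
namespace MGraph

lemma sgon_mono_subdiv (X : MGraph) (e₀ : X.E) :
    sgonSet X ⊆ sgonSet (subdivide X e₀) := by
  rintro d ⟨G', T, ι, p, href, hloop, htree, φ, hdeg⟩
  obtain ⟨ehat, hp⟩ := href.prov e₀
  obtain ⟨ι₁, p₁, h₁⟩ := href.push e₀ ehat hp
  set e' := φ.fE ehat with he'
  set F : Finset G'.E := Finset.univ.filter (fun e => φ.fE e = e') with hFdef
  have hF : ∀ e, e ∈ F ↔ φ.fE e = e' := by
    intro e
    simp [hFdef]
  obtain ⟨ι₂, p₂, h₂⟩ := refines_subdivide_subAll G' F ehat ((hF ehat).mpr rfl)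
  obtain ⟨ι₃, p₃, h₃⟩ := h₂.trans' h₁
  have hTl : T.Loopless := tree_loopless htree
  exact ⟨SubAll G' F, subdivide T e', ι₃, p₃, h₃, subAll_loopless F hloop,
    subdivide_isTree e' htree, subdivMorph φ e' F hF hloop hTl,
    subdivMorph_isDegree φ e' F hF hloop hTl hdeg⟩

lemma sgon_mono_leaf (X : MGraph) (v₀ : X.V) :
    sgonSet X ⊆ sgonSet (addLeaf X v₀) := by
  rintro d ⟨G', T, ι, p, href, hloop, htree, φ, hdeg⟩
  obtain ⟨ι₁, p₁, h₁⟩ := href.pushLeaf v₀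
  set w' := φ.fV (ι v₀) with hw'
  set S : Finset G'.V := Finset.univ.filter (fun v => φ.fV v = w') with hSdef
  have hS : ∀ v, v ∈ S ↔ φ.fV v = w' := by
    intro v
    simp [hSdef]
  obtain ⟨ι₂, p₂, h₂⟩ := refines_addLeaf_addAll G' S (ι v₀) ((hS _).mpr rfl)
  obtain ⟨ι₃, p₃, h₃⟩ := h₂.trans' h₁
  exact ⟨AddAll G' S, addLeaf T w', ι₃, p₃, h₃, addAll_loopless S hloop,
    addLeaf_isTree w' htree, leafMorph φ w' S hS, leafMorph_isDegree φ w' S hS hdeg⟩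

lemma sgon_iso {X Y : MGraph} (φ : Iso X Y) : sgonSet X ⊆ sgonSet Y := by
  rintro d ⟨G', T, ι, p, href, hloop, htree, ψ, hdeg⟩
  obtain ⟨ι₀, p₀, h₀⟩ := φ.symm.refines
  obtain ⟨ι₁, p₁, h₁⟩ := href.trans' h₀
  exact ⟨G', T, ι₁, p₁, h₁, hloop, htree, ψ, hdeg⟩

lemma sgon_superset {G G' : MGraph} {ι : G.V → G'.V} {p : G'.E → Option G.E}
    (h : Refines G G' ι p) : sgonSet G ⊆ sgonSet G' := by
  induction h with
  | refl => exact subset_rfl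
  | subdiv h e₀ ih => exact ih.trans (sgon_mono_subdiv _ e₀)
  | leaf h v₀ ih => exact ih.trans (sgon_mono_leaf _ v₀)
  | iso h φ ih => exact ih.trans (sgon_iso φ)

lemma sgon_subset {G G' : MGraph} {ι : G.V → G'.V} {p : G'.E → Option G.E}
    (h : Refines G G' ι p) : sgonSet G' ⊆ sgonSet G := by
  rintro d ⟨G'', T, ι₂, p₂, href, hloop, htree, ψ, hdeg⟩
  obtain ⟨ι₃, p₃, h₃⟩ := href.trans' h
  exact ⟨G'', T, ι₃, p₃, h₃, hloop, htree, ψ, hdeg⟩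

lemma sgon_eq {G G' : MGraph} {ι : G.V → G'.V} {p : G'.E → Option G.E}
    (h : Refines G G' ι p) : sgonSet G' = sgonSet G :=
  Set.Subset.antisymm (sgon_subset h) (sgon_superset h)

end MGraph

/-- Corollary "steq": if `G'` is a refinement of a connected
graph `G` then `sgon(G') = sgon(G)` (the sets of degrees of finite harmonic
morphisms to trees from refinements have the same least element).
Consequently, stable gonality is well defined on equivalence classes of
graphs, where two graphs are equivalent when they are refinements of the same
stable graph. -/
theorem stable_gonality_refinement_invariant :
    (∀ (G G' : MGraph) (ι : G.V → G'.V) (p : G'.E → Option G.E),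
        G.Connected → Refines G G' ι p →
        ∀ n : ℕ, IsLeast (sgonSet G') n ↔ IsLeast (sgonSet G) n) ∧
    (∀ (H G₁ G₂ : MGraph) (ι₁ : H.V → G₁.V) (p₁ : G₁.E → Option H.E)
        (ι₂ : H.V → G₂.V) (p₂ : G₂.E → Option H.E),
        H.Connected → (∀ v : H.V, 3 ≤ H.degree v) →
        Refines H G₁ ι₁ p₁ → Refines H G₂ ι₂ p₂ →
        ∀ n : ℕ, IsLeast (sgonSet G₁) n ↔ IsLeast (sgonSet G₂) n) := by
  constructor
  · intro G G' ι p _ href n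
    rw [MGraph.sgon_eq href]
  · intro H G₁ G₂ ι₁ p₁ ι₂ p₂ _ _ h1 h2 n
    rw [MGraph.sgon_eq h1, MGraph.sgon_eq h2]
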